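/- arXiv:1101.5662 — 4 statements merged into one kernel-verified Lean document; each statement's English description precedes it below -/
import Mathlib

section
/- Let Q be a positive-definite integral lattice that contains two orthogonal vectors of norm 1 (i.e., represents ⟨1⟩ ⊕ ⟨1⟩) and three pairwise orthogonal vectors of norm 2 (i.e., represents ⟨2⟩ ⊕ ⟨2⟩ ⊕ ⟨2⟩). Then Q contains three pairwise orthogonal vectors of norms 1, 1, and 2 respectively (i.e., Q represents ⟨1⟩ ⊕ ⟨1⟩ ⊕ ⟨2⟩). -/
/-!
Take orthonormal `x, y` and pairwise orthogonal `u, v, w` of norm 2. By Bessel's inequality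
`B x u, B y u ∈ {-1, 0, 1}`; if both vanish, `x, y, u` is the required triple. Otherwise some
unit vector `a` has `B a u = s = ±1`, and `e := u - s • a` is a unit vector orthogonal to `a`.
If `v` or `w` is orthogonal to `a`, it is orthogonal to `e` as well and completes `a, e` to the
required triple. If neither is, Bessel's inequality for `(a, e)` fails for a suitable
combination of `v` and `w`.
-/

namespace LinearMap.BilinForm

variable {R M : Type*} [AddCommGroup M]

section CommRing

variable [CommRing R] [Module R M] {B : LinearMap.BilinForm R M}

theorem IsSymm.exists_orthogonal_component (hB : B.IsSymm) {a : M} (ha : B a a = 1) (z : M) :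
    ∃ e : M, B a e = 0 ∧ B e e = B z z - B a z ^ 2 ∧ ∀ s, B e s = B z s - B a z * B a s := by
  set e := z - B a z • a
  have he : ∀ s, B e s = B z s - B a z * B a s := fun s => by simp [e]
  have hae : B a e = 0 := by rw [hB.eq, he, ha, hB.eq, mul_one, sub_self]
  refine ⟨e, hae, ?_, he⟩
  rw [he, hae, mul_zero, sub_zero, hB.eq, he, sq]

end CommRing

section Ordered

variable [CommRing R] [LinearOrder R] [IsStrictOrderedRing R] [Module R M]
  {B : LinearMap.BilinForm R M}

theorem IsPosSemidef.sq_apply_le (hB : B.IsPosSemidef) {a : M} (ha : B a a = 1) (z : M) :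
    B a z ^ 2 ≤ B z z := by
  obtain ⟨e, -, he, -⟩ := hB.isSymm.exists_orthogonal_component ha z
  linarith [hB.nonneg e]

theorem IsPosSemidef.sq_add_sq_apply_le (hB : B.IsPosSemidef) {a b : M} (ha : B a a = 1)
    (hb : B b b = 1) (hab : B a b = 0) (z : M) :
    B a z ^ 2 + B b z ^ 2 ≤ B z z := by
  obtain ⟨e, -, he, hes⟩ := hB.isSymm.exists_orthogonal_component ha z
  have := hB.sq_apply_le hb e
  rw [hB.isSymm.eq b, hes, hab, mul_zero, sub_zero, hB.isSymm.eq, he] at this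
  linarith

-- Bessel's inequality for `p • t + p' • t'`, where `p = B a t` and `p' = B a t'`: its coefficients
-- along `a` and `e` are `N` and `-s N` with `N = p² + p'²`, and its norm is `2 N`.
theorem IsPosSemidef.sq_add_sq_apply_le_one (hB : B.IsPosSemidef) {a e t t' : M} {s : R}
    (ha : B a a = 1) (he : B e e = 1) (hae : B a e = 0) (ht : B t t = 2) (ht' : B t' t' = 2)
    (htt' : B t t' = 0) (hs : s ^ 2 = 1) (het : B e t = -(s * B a t))
    (het' : B e t' = -(s * B a t')) :
    B a t ^ 2 + B a t' ^ 2 ≤ 1 := by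
  have hbessel := hB.sq_add_sq_apply_le ha he hae (B a t • t + B a t' • t')
  simp only [map_add, map_smul, LinearMap.add_apply, LinearMap.smul_apply, smul_eq_mul,
    het, het', ht, ht', htt', hB.isSymm.eq t' t] at hbessel
  nlinarith [sq_nonneg (B a t), sq_nonneg (B a t')]

end Ordered

section Int

variable [Module ℤ M] {B : LinearMap.BilinForm ℤ M}

theorem IsPosSemidef.apply_eq_zero_or_sq_eq_one (hB : B.IsPosSemidef) {a z : M}
    (ha : B a a = 1) (hz : B z z = 2) : B a z = 0 ∨ B a z ^ 2 = 1 := by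
  have hle := hB.sq_apply_le ha z
  rw [hz] at hle
  generalize B a z = p at hle ⊢
  have : p ≤ 1 := by nlinarith
  have : -1 ≤ p := by nlinarith
  interval_cases p <;> simp

theorem IsPosSemidef.exists_one_one_two_of_sq_apply_eq_one (hB : B.IsPosSemidef) {a z t t' : M}
    (ha : B a a = 1) (hz : B z z = 2) (ht : B t t = 2) (ht' : B t' t' = 2)
    (hzt : B z t = 0) (hzt' : B z t' = 0) (htt' : B t t' = 0) (haz : B a z ^ 2 = 1) :
    ∃ e₁ e₂ f : M, B e₁ e₁ = 1 ∧ B e₂ e₂ = 1 ∧ B f f = 2 ∧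
      B e₁ e₂ = 0 ∧ B e₁ f = 0 ∧ B e₂ f = 0 := by
  obtain ⟨e, hae, he, hes⟩ := hB.isSymm.exists_orthogonal_component ha z
  replace he : B e e = 1 := by rw [he, hz, haz]; norm_num
  have het : ∀ s, B z s = 0 → B e s = -(B a z * B a s) := fun s hs => by rw [hes, hs, zero_sub]
  by_cases hat : B a t = 0
  · exact ⟨a, e, t, ha, he, ht, hae, hat, by simp [het t hzt, hat]⟩
  by_cases hat' : B a t' = 0
  · exact ⟨a, e, t', ha, he, ht', hae, hat', by simp [het t' hzt', hat']⟩
  have hle := hB.sq_add_sq_apply_le_one ha he hae ht ht' htt' haz (het t hzt) (het t' hzt')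
  linarith [sq_pos_of_ne_zero hat, sq_pos_of_ne_zero hat']

end Int

end LinearMap.BilinForm

theorem represents_112_general (Q : Type*) [AddCommGroup Q] [Module ℤ Q]
    (B : LinearMap.BilinForm ℤ Q)
    (hsymm : ∀ x y : Q, B x y = B y x)
    (hpos : ∀ x : Q, x ≠ 0 → 0 < B x x)
    (h11 : ∃ x y : Q, B x x = 1 ∧ B y y = 1 ∧ B x y = 0)
    (h222 : ∃ u v w : Q, B u u = 2 ∧ B v v = 2 ∧ B w w = 2 ∧
      B u v = 0 ∧ B u w = 0 ∧ B v w = 0) :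
    ∃ a b c : Q, B a a = 1 ∧ B b b = 1 ∧ B c c = 2 ∧
      B a b = 0 ∧ B a c = 0 ∧ B b c = 0 := by
  have hB : B.IsPosSemidef :=
    ⟨⟨hsymm⟩, ⟨fun z => (eq_or_ne z 0).elim (fun h => by simp [h]) fun h => (hpos z h).le⟩⟩
  obtain ⟨x, y, hx, hy, hxy⟩ := h11
  obtain ⟨u, v, w, hu, hv, hw, huv, huw, hvw⟩ := h222
  rcases hB.apply_eq_zero_or_sq_eq_one hx hu with hxu | hxu
  · rcases hB.apply_eq_zero_or_sq_eq_one hy hu with hyu | hyu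
    · exact ⟨x, y, u, hx, hy, hu, hxy, hxu, hyu⟩
    · exact hB.exists_one_one_two_of_sq_apply_eq_one hy hu hv hw huv huw hvw hyu
  · exact hB.exists_one_one_two_of_sq_apply_eq_one hx hu hv hw huv huw hvw hxu

/-- A positive-definite integral lattice representing ⟨1⟩⊕⟨1⟩ and
⟨2⟩⊕⟨2⟩⊕⟨2⟩ also represents ⟨1⟩⊕⟨1⟩⊕⟨2⟩. -/
theorem represents_112 (Q : Type*) [AddCommGroup Q] [Module ℤ Q]
    [Module.Free ℤ Q] [Module.Finite ℤ Q]
    (B : LinearMap.BilinForm ℤ Q)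
    (hsymm : ∀ x y : Q, B x y = B y x)
    (hpos : ∀ x : Q, x ≠ 0 → 0 < B x x)
    (h11 : ∃ x y : Q, B x x = 1 ∧ B y y = 1 ∧ B x y = 0)
    (h222 : ∃ u v w : Q, B u u = 2 ∧ B v v = 2 ∧ B w w = 2 ∧
      B u v = 0 ∧ B u w = 0 ∧ B v w = 0) :
    ∃ a b c : Q, B a a = 1 ∧ B b b = 1 ∧ B c c = 2 ∧
      B a b = 0 ∧ B a c = 0 ∧ B b c = 0 :=
  represents_112_general Q B hsymm hpos h11 h222
end

section
/- Let Q be a positive-definite integral lattice containing sublattices L and L' (as abstract lattices; i.e., Q represents both L and L'). Suppose L' is generated by vectors v₁, ..., vₖ whose norms (vᵢ, vᵢ) are each strictly less than the minimal norm of a nonzero vector of the dual lattice L*. Then the given copy of L' in Q is orthogonal to the given copy of L, so Q represents L ⊕ L'. -/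
/-!
Project a generator `v` orthogonally onto the rational span `W` of `L`; this is possible since
`B` is positive definite and `W` is finite-dimensional. The projection `x` pairs with `L` exactly
as `v` does, and these pairings are integral because both lie in the integral lattice `Q`, so `x`
lies in the dual lattice `L*`. Since `v - x ⟂ x`, we get `B x x ≤ B v v`, which is incompatible
with `B v v < B x x` unless `x = 0`; hence `v ⟂ L`, and by linearity all of `L'` is orthogonal
to `L`.
-/

open LinearMap (BilinForm)

namespace LinearMap.BilinForm

variable {K V : Type*} [Field K] [AddCommGroup V] [Module K V]

def dualLattice (B : BilinForm K V) (L : Submodule ℤ V) : Set V :=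
  {x | x ∈ Submodule.span K (L : Set V) ∧ ∀ w ∈ L, ∃ n : ℤ, (n : K) = B x w}

theorem exists_mem_forall_apply_eq_of_nondegenerate_restrict {B : BilinForm K V}
    {W : Submodule K V} [FiniteDimensional K W] (hW : (B.restrict W).Nondegenerate) (v : V) :
    ∃ x ∈ W, ∀ w ∈ W, B x w = B v w := by
  refine ⟨((B.restrict W).toDual hW).symm ((B v).comp W.subtype), Submodule.coe_mem _,
    fun w hw => ?_⟩
  simpa using
    apply_toDual_symm_apply (B := B.restrict W) (hB := hW) ((B v).comp W.subtype) ⟨w, hw⟩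

theorem nondegenerate_restrict_of_anisotropic {B : BilinForm K V}
    (hB : ∀ x : V, B x x = 0 → x = 0) (W : Submodule K V) [FiniteDimensional K W] :
    (B.restrict W).Nondegenerate :=
  .ofSeparatingLeft fun x hx => Subtype.ext (hB x (hx x))

theorem apply_eq_zero_of_norm_lt_min_dualLattice [LinearOrder K] [IsStrictOrderedRing K]
    {B : BilinForm K V} (hsymm : ∀ x y : V, B x y = B y x)
    (hpos : ∀ x : V, x ≠ 0 → 0 < B x x) {L : Submodule ℤ V}
    [FiniteDimensional K (Submodule.span K (L : Set V))] {v : V}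
    (hvint : ∀ w ∈ L, ∃ n : ℤ, (n : K) = B v w)
    (hsmall : ∀ x ∈ B.dualLattice L, x ≠ 0 → B v v < B x x) {w : V} (hw : w ∈ L) :
    B v w = 0 := by
  obtain ⟨x, hxW, hx⟩ :=
    exists_mem_forall_apply_eq_of_nondegenerate_restrict (nondegenerate_restrict_of_anisotropic
      (fun x hx => by_contra fun hx0 => (hpos x hx0).ne' hx) (Submodule.span K (L : Set V))) v
  have hxdual : x ∈ B.dualLattice L :=
    ⟨hxW, fun w hw => hx w (Submodule.subset_span hw) ▸ hvint w hw⟩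
  have hnorm : B (v - x) (v - x) = B v v - B x x := by
    have hvx : B v x = B x x := (hx x hxW).symm
    rw [map_sub, map_sub, LinearMap.sub_apply, LinearMap.sub_apply, hsymm x v, hvx]
    ring
  have hx0 : x = 0 := by
    by_contra hne
    have hlt := hsmall x hxdual hne
    rcases eq_or_ne (v - x) 0 with h | h
    · rw [sub_eq_zero.mp h] at hlt
      exact hlt.false
    · linarith [hpos _ h]
  rw [← hx w (Submodule.subset_span hw), hx0, map_zero, LinearMap.zero_apply]

theorem finiteDimensional_span_of_fg {R : Type*} [CommRing R] [Algebra R K] [Module R V]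
    [IsScalarTower R K V] {L : Submodule R V} (hL : L.FG) :
    FiniteDimensional K (Submodule.span K (L : Set V)) := by
  obtain ⟨S, rfl⟩ := hL
  rw [Submodule.span_span_of_tower]
  exact FiniteDimensional.span_of_finite K S.finite_toSet

end LinearMap.BilinForm

open LinearMap.BilinForm in
/-- Let Q be a positive-definite integral lattice containing sublattices
L and L', where L' is generated by vectors v₁, ..., vₖ whose norms are each strictly
less than the minimal norm of a nonzero vector of the dual lattice
L* = {x ∈ L ⊗ ℚ : (x,w) ∈ ℤ for all w ∈ L}. Then L' is orthogonal to L
(so Q represents L ⊕ L'). -/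
theorem small_generators_orthogonal (V : Type*) [AddCommGroup V] [Module ℚ V]
    (B : LinearMap.BilinForm ℚ V)
    (hsymm : ∀ x y : V, B x y = B y x)
    (hpos : ∀ x : V, x ≠ 0 → 0 < B x x)
    (Q L L' : Submodule ℤ V) (hQfg : Q.FG) (hLQ : L ≤ Q) (hL'Q : L' ≤ Q)
    (hint : ∀ x ∈ Q, ∀ y ∈ Q, ∃ n : ℤ, (n : ℚ) = B x y)
    (k : ℕ) (v : Fin k → V)
    (hgen : L' = Submodule.span ℤ (Set.range v))
    (hsmall : ∀ i : Fin k, ∀ x ∈ Submodule.span ℚ (L : Set V),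
      (∀ w ∈ L, ∃ n : ℤ, (n : ℚ) = B x w) → x ≠ 0 → B (v i) (v i) < B x x) :
    ∀ a ∈ L', ∀ b ∈ L, B a b = 0 := by
  have := finiteDimensional_span_of_fg (K := ℚ) (hQfg.of_le hLQ)
  have hgen_orth : ∀ i, ∀ b ∈ L, B (v i) b = 0 := fun i b hb =>
    apply_eq_zero_of_norm_lt_min_dualLattice hsymm hpos
      (fun w hw => hint _ (hL'Q (hgen ▸ Submodule.subset_span ⟨i, rfl⟩)) w (hLQ hw))
      (fun x hx => hsmall i x hx.1 hx.2) hb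
  intro a ha b hb
  have hspan : L' ≤ LinearMap.ker ((B.flip b).restrictScalars ℤ) :=
    hgen ▸ Submodule.span_le.mpr (Set.range_subset_iff.mpr fun i => hgen_orth i b hb)
  exact hspan ha
end

section
/- Let L be a positive-definite lattice whose dual lattice L* has minimal nonzero norm strictly greater than 1, and let n ≥ 1. If a positive-definite integral lattice Q represents both L and ℤⁿ (the standard cubic lattice), then Q represents L ⊕ ℤⁿ. -/
/-!
A vector `e` of norm 1 in `Q` is orthogonal to the image of `L`: the functional `x ↦ (f x, e)` on
`L` is integral, so it is represented by a dual vector `v ∈ L*`, and Cauchy–Schwarz against the unit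
vector `e`, applied to an integral multiple of `v` lying in `L`, gives `(v, v) ≤ 1`. The hypothesis
on the minimum of `L*` forces `v = 0`. The images of the standard basis vectors of `ℤⁿ` are such
unit vectors, so the two embeddings combine into an embedding of `L ⊕ ℤⁿ`.
-/

open nonZeroDivisors Submodule

section RationalSpan

variable {V : Type*} [AddCommGroup V] [Module ℚ V]

lemma localized'_id_eq_span_rat (L : Submodule ℤ V) :
    haveI := isLocalizedModule_id ℤ⁰ V ℚ
    L.localized' ℚ ℤ⁰ LinearMap.id = span ℚ (L : Set V) := by
  rw [localized'_eq_span, LinearMap.id_coe, Set.image_id]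

lemma exists_ne_zero_zsmul_mem {L : Submodule ℤ V} {x : V} (hx : x ∈ span ℚ (L : Set V)) :
    ∃ m : ℤ, m ≠ 0 ∧ m • x ∈ L := by
  have := isLocalizedModule_id ℤ⁰ V ℚ
  rw [← localized'_id_eq_span_rat, mem_localized'] at hx
  obtain ⟨y, hy, s, rfl⟩ := hx
  refine ⟨s, nonZeroDivisors.coe_ne_zero s, ?_⟩
  rwa [← Submonoid.smul_def, IsLocalizedModule.mk'_cancel']

lemma fg_span_rat {L : Submodule ℤ V} (hL : L.FG) : (span ℚ (L : Set V)).FG := by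
  have := isLocalizedModule_id ℤ⁰ V ℚ
  rw [← localized'_id_eq_span_rat]
  exact localized'_fg ℚ ℤ⁰ _ hL

lemma exists_extend_span_rat {M : Type*} [AddCommGroup M] [Module ℚ M] (L : Submodule ℤ V)
    (ℓ : L →ₗ[ℤ] M) :
    ∃ ℓ' : span ℚ (L : Set V) →ₗ[ℚ] M, ∀ x : L, ℓ' ⟨x, subset_span x.2⟩ = ℓ x := by
  have := isLocalizedModule_id ℤ⁰ V ℚ
  have hbc := IsLocalizedModule.isBaseChange ℤ⁰ ℚ (L.toLocalized' ℚ ℤ⁰ LinearMap.id)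
  exact ⟨hbc.lift ℓ ∘ₗ (LinearEquiv.ofEq _ _ (localized'_id_eq_span_rat L).symm).toLinearMap,
    hbc.lift_eq ℓ⟩

end RationalSpan

namespace LinearMap.BilinForm

variable {R M : Type*} [CommRing R] [PartialOrder R] [AddCommGroup M] [Module R M]
  {B : LinearMap.BilinForm R M}

lemma separatingLeft_of_pos (hB : ∀ x, x ≠ 0 → 0 < B x x) : B.SeparatingLeft := fun x hx => by
  by_contra h0
  exact (hB x h0).ne' (hx x)

lemma apply_self_nonneg_of_pos (hB : ∀ x, x ≠ 0 → 0 < B x x) (x : M) : 0 ≤ B x x := by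
  rcases eq_or_ne x 0 with rfl | hx
  · simp
  · exact (hB x hx).le

end LinearMap.BilinForm

section DualLattice

variable {V : Type*} [AddCommGroup V] [Module ℚ V] (B : LinearMap.BilinForm ℚ V)

lemma exists_mem_span_rat_apply_eq (hB : ∀ x : V, x ≠ 0 → 0 < B x x) {L : Submodule ℤ V}
    (hL : L.FG) (ℓ : L →ₗ[ℤ] ℚ) :
    ∃ v ∈ span ℚ (L : Set V), ∀ x : L, B v x = ℓ x := by
  set W := span ℚ (L : Set V)
  have : FiniteDimensional ℚ W := Module.Finite.iff_fg.mpr (fg_span_rat hL)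
  have hBW : (B.restrict W).Nondegenerate :=
    .ofSeparatingLeft <| LinearMap.BilinForm.separatingLeft_of_pos fun x hx =>
      hB x (by simpa using hx)
  obtain ⟨ℓ', hℓ'⟩ := exists_extend_span_rat L ℓ
  refine ⟨((B.restrict W).toDual hBW).symm ℓ', Subtype.mem _, fun x => ?_⟩
  rw [← hℓ' x]
  exact LinearMap.BilinForm.apply_toDual_symm_apply (B := B.restrict W) ℓ' ⟨x, subset_span x.2⟩

/-- Test the bound on `m • v ∈ L`: it reads `m² (v, v)² ≤ m² (v, v)`. -/
lemma apply_self_le_one_of_apply_sq_le {L : Submodule ℤ V} {v : V} (hv : v ∈ span ℚ (L : Set V))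
    (h : ∀ x : L, B v x ^ 2 ≤ B x x) : B v v ≤ 1 := by
  obtain ⟨m, hm, hmv⟩ := exists_ne_zero_zsmul_mem hv
  have hmv' := h ⟨m • v, hmv⟩
  simp only [← Int.cast_smul_eq_zsmul ℚ m v, map_smul, LinearMap.smul_apply, smul_eq_mul] at hmv'
  have hm2 : (0 : ℚ) < (m : ℚ) ^ 2 := by positivity
  by_contra! hv1
  have hpos : 0 < B v v * (B v v - 1) := mul_pos (by linarith) (by linarith)
  nlinarith [mul_pos hm2 hpos]

lemma eq_zero_and_eq_zero_of_add_dotProduct_self_eq_zero {ι : Type*} [Fintype ι]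
    (hB : ∀ x : V, x ≠ 0 → 0 < B x x) {x : V} {a : ι → ℤ}
    (h : B x x + ((a ⬝ᵥ a : ℤ) : ℚ) = 0) : x = 0 ∧ a = 0 := by
  have hx := LinearMap.BilinForm.apply_self_nonneg_of_pos hB x
  have ha : (0 : ℚ) ≤ ((a ⬝ᵥ a : ℤ) : ℚ) := by
    exact_mod_cast Finset.sum_nonneg fun i _ => mul_self_nonneg (a i)
  refine ⟨?_, dotProduct_self_eq_zero.mp (by exact_mod_cast (by linarith : ((a ⬝ᵥ a : ℤ) : ℚ) = 0))⟩
  by_contra hx0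
  linarith [hB x hx0]

end DualLattice

section IntegralLattice

variable {Q : Type*} [AddCommGroup Q] [Module ℤ Q] {BQ : LinearMap.BilinForm ℤ Q}

lemma apply_eq_zero_of_apply_self_eq_one {V : Type*} [AddCommGroup V] [Module ℚ V]
    {B : LinearMap.BilinForm ℚ V} (hB : ∀ x : V, x ≠ 0 → 0 < B x x) {L : Submodule ℤ V}
    (hL : L.FG)
    (hdual : ∀ x ∈ span ℚ (L : Set V), (∀ w ∈ L, ∃ m : ℤ, (m : ℚ) = B x w) → x ≠ 0 → 1 < B x x)
    (hsymm : ∀ x y : Q, BQ x y = BQ y x) (hpos : ∀ x : Q, x ≠ 0 → 0 < BQ x x)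
    {f : L →ₗ[ℤ] Q} (hf : ∀ x y : L, ((BQ (f x) (f y) : ℤ) : ℚ) = B x y)
    {e : Q} (he : BQ e e = 1) (x : L) : BQ (f x) e = 0 := by
  obtain ⟨v, hvL, hv⟩ :=
    exists_mem_span_rat_apply_eq B hB hL (Algebra.linearMap ℤ ℚ ∘ₗ BQ.flip e ∘ₗ f)
  replace hv : ∀ y : L, B v y = BQ (f y) e := hv
  have hcs (y : L) : B v y ^ 2 ≤ B y y := by
    have hcs := BQ.apply_mul_apply_le_of_forall_zero_le (BQ.apply_self_nonneg_of_pos hpos) (f y) e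
    rw [hsymm e, he, mul_one, ← sq] at hcs
    rw [hv, ← hf]
    exact_mod_cast hcs
  have hv0 : v = 0 := by
    by_contra hv0
    exact (apply_self_le_one_of_apply_sq_le B hvL hcs).not_gt
      (hdual v hvL (fun w hw => ⟨_, (hv ⟨w, hw⟩).symm⟩) hv0)
  have hx := hv x
  rwa [hv0, map_zero, LinearMap.zero_apply, eq_comm, Int.cast_eq_zero] at hx

lemma apply_coprod_apply_coprod {M₁ M₂ : Type*} [AddCommGroup M₁] [Module ℤ M₁]
    [AddCommGroup M₂] [Module ℤ M₂] (hsymm : ∀ x y : Q, BQ x y = BQ y x)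
    {f : M₁ →ₗ[ℤ] Q} {g : M₂ →ₗ[ℤ] Q} (horth : ∀ x y, BQ (f x) (g y) = 0) (p q : M₁ × M₂) :
    BQ (f.coprod g p) (f.coprod g q) = BQ (f p.1) (f q.1) + BQ (g p.2) (g q.2) := by
  simp only [LinearMap.coprod_apply, map_add, LinearMap.add_apply, horth, hsymm (g _) (f _)]
  ring

end IntegralLattice

theorem represents_L_oplus_Zn_general (V : Type*) [AddCommGroup V] [Module ℚ V]
    (B : LinearMap.BilinForm ℚ V)
    (hposV : ∀ x : V, x ≠ 0 → 0 < B x x)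
    (L : Submodule ℤ V) (hLfg : L.FG)
    (hdual : ∀ x ∈ Submodule.span ℚ (L : Set V),
      (∀ w ∈ L, ∃ m : ℤ, (m : ℚ) = B x w) → x ≠ 0 → 1 < B x x)
    (n : ℕ)
    (Q : Type*) [AddCommGroup Q] [Module ℤ Q]
    (BQ : LinearMap.BilinForm ℤ Q)
    (hsymm : ∀ x y : Q, BQ x y = BQ y x)
    (hpos : ∀ x : Q, x ≠ 0 → 0 < BQ x x)
    (hrepL : ∃ f : L →ₗ[ℤ] Q, Function.Injective f ∧
      ∀ x y : L, ((BQ (f x) (f y) : ℤ) : ℚ) = B (x : V) (y : V))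
    (hrepZn : ∃ g : (Fin n → ℤ) →ₗ[ℤ] Q, Function.Injective g ∧
      ∀ a b : Fin n → ℤ, BQ (g a) (g b) = dotProduct a b) :
    ∃ φ : (L × (Fin n → ℤ)) →ₗ[ℤ] Q, Function.Injective φ ∧
      ∀ p q : L × (Fin n → ℤ),
        ((BQ (φ p) (φ q) : ℤ) : ℚ) = B (p.1 : V) (q.1 : V) + ((dotProduct p.2 q.2 : ℤ) : ℚ) := by
  obtain ⟨f, -, hf⟩ := hrepL
  obtain ⟨g, -, hg⟩ := hrepZn
  have hunit (i : Fin n) : BQ (g (Pi.single i 1)) (g (Pi.single i 1)) = 1 := by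
    simp [hg]
  have horth (x : L) : (BQ (f x)).comp g = 0 :=
    (Pi.basisFun ℤ (Fin n)).ext fun i => by
      rw [Pi.basisFun_apply, LinearMap.comp_apply, LinearMap.zero_apply]
      exact apply_eq_zero_of_apply_self_eq_one hposV hLfg hdual hsymm hpos hf (hunit i) x
  have hφ (p q : L × (Fin n → ℤ)) : ((BQ (f.coprod g p) (f.coprod g q) : ℤ) : ℚ) =
      B (p.1 : V) (q.1 : V) + ((dotProduct p.2 q.2 : ℤ) : ℚ) := by
    rw [apply_coprod_apply_coprod hsymm (fun x a => LinearMap.congr_fun (horth x) a), hg,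
      Int.cast_add, hf]
  refine ⟨f.coprod g, (injective_iff_map_eq_zero _).mpr fun p hp => ?_, hφ⟩
  have h0 : B (p.1 : V) p.1 + ((dotProduct p.2 p.2 : ℤ) : ℚ) = 0 := by
    rw [← hφ, hp]
    simp
  obtain ⟨h1, h2⟩ := eq_zero_and_eq_zero_of_add_dotProduct_self_eq_zero B hposV h0
  exact Prod.ext (Subtype.ext h1) h2

/-- Let L be a positive-definite lattice (a finitely generated
ℤ-submodule of a ℚ-vector space with positive-definite symmetric form) whose dual
lattice L* has minimal nonzero norm strictly greater than 1, and let n ≥ 1. If a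
positive-definite integral lattice Q represents both L and ℤⁿ, then Q represents
the orthogonal direct sum L ⊕ ℤⁿ. -/
theorem represents_L_oplus_Zn (V : Type*) [AddCommGroup V] [Module ℚ V]
    (B : LinearMap.BilinForm ℚ V)
    (hsymmV : ∀ x y : V, B x y = B y x)
    (hposV : ∀ x : V, x ≠ 0 → 0 < B x x)
    (L : Submodule ℤ V) (hLfg : L.FG)
    (hdual : ∀ x ∈ Submodule.span ℚ (L : Set V),
      (∀ w ∈ L, ∃ m : ℤ, (m : ℚ) = B x w) → x ≠ 0 → 1 < B x x)
    (n : ℕ) (hn : 1 ≤ n)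
    (Q : Type*) [AddCommGroup Q] [Module ℤ Q] [Module.Free ℤ Q] [Module.Finite ℤ Q]
    (BQ : LinearMap.BilinForm ℤ Q)
    (hsymm : ∀ x y : Q, BQ x y = BQ y x)
    (hpos : ∀ x : Q, x ≠ 0 → 0 < BQ x x)
    (hrepL : ∃ f : L →ₗ[ℤ] Q, Function.Injective f ∧
      ∀ x y : L, ((BQ (f x) (f y) : ℤ) : ℚ) = B (x : V) (y : V))
    (hrepZn : ∃ g : (Fin n → ℤ) →ₗ[ℤ] Q, Function.Injective g ∧
      ∀ a b : Fin n → ℤ, BQ (g a) (g b) = dotProduct a b) :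
    ∃ φ : (L × (Fin n → ℤ)) →ₗ[ℤ] Q, Function.Injective φ ∧
      ∀ p q : L × (Fin n → ℤ),
        ((BQ (φ p) (φ q) : ℤ) : ℚ) = B (p.1 : V) (q.1 : V) + ((dotProduct p.2 q.2 : ℤ) : ℚ) :=
  represents_L_oplus_Zn_general V B hposV L hLfg hdual n Q BQ hsymm hpos hrepL hrepZn
end

section
/- Every positive-definite integral lattice Q that represents both ⟨1⟩ ⊕ ⟨1⟩ and ⟨2⟩ ⊕ ⟨2⟩ ⊕ ⟨2⟩ represents every lattice represented by ⟨1⟩ ⊕ ⟨1⟩ ⊕ ⟨2⟩. (That is, {⟨1⟩⊕⟨1⟩, ⟨2⟩⊕⟨2⟩⊕⟨2⟩} is a criterion set for the set of lattices represented by ⟨1⟩⊕⟨1⟩⊕⟨2⟩.) -/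
/-!
Let `e₁, e₂` be orthogonal vectors of norm 1 and `f₁, f₂, f₃` pairwise orthogonal vectors of
norm 2 in `Q`. Bessel's inequality, i.e. `0 ≤ B v v` for `v = 2 eₖ - ∑ᵢ B(eₖ, fᵢ) fᵢ`, gives
`∑ᵢ B(eₖ, fᵢ)² ≤ 2`; so each `eₖ` is orthogonal to some `fᵢ`, and every `B(eₖ, fᵢ)` lies in
`{-1, 0, 1}`. If `e₂` is orthogonal to all `fᵢ`, then `e₁, e₂, fᵢ` with `fᵢ ⊥ e₁` have norms
`1, 1, 2`. Otherwise `B(e₂, fⱼ) = ±1` and `e₂ ⊥ fᵢ` for some `i ≠ j`, and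
`fⱼ - B(e₂, fⱼ) e₂, e₂, fᵢ` are pairwise orthogonal of norms `1, 1, 2`. Either way `Q`
represents `⟨1⟩ ⊕ ⟨1⟩ ⊕ ⟨2⟩`, and representability is transitive.
-/

/-- `Q` (with form `BQ`) represents `L` (with form `BL`): there is an injective
ℤ-linear map preserving the bilinear forms. -/
def Represents {L Q : Type*} [AddCommGroup L] [Module ℤ L] [AddCommGroup Q] [Module ℤ Q]
    (BL : LinearMap.BilinForm ℤ L) (BQ : LinearMap.BilinForm ℤ Q) : Prop :=
  ∃ f : L →ₗ[ℤ] Q, Function.Injective f ∧ ∀ x y : L, BQ (f x) (f y) = BL x y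

/-- The form ⟨1⟩ ⊕ ⟨1⟩ ⊕ ⟨2⟩. -/
noncomputable def formA : LinearMap.BilinForm ℤ (Fin 3 → ℤ) :=
  Matrix.toBilin' (Matrix.diagonal ![1, 1, 2])

/-- The form ⟨1⟩ ⊕ ⟨1⟩. -/
noncomputable def formB : LinearMap.BilinForm ℤ (Fin 2 → ℤ) :=
  Matrix.toBilin' (Matrix.diagonal ![1, 1])

/-- The form ⟨2⟩ ⊕ ⟨2⟩ ⊕ ⟨2⟩. -/
noncomputable def formC : LinearMap.BilinForm ℤ (Fin 3 → ℤ) :=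
  Matrix.toBilin' (Matrix.diagonal ![2, 2, 2])

section Represents

variable {L M Q : Type*} [AddCommGroup L] [Module ℤ L] [AddCommGroup M] [Module ℤ M]
  [AddCommGroup Q] [Module ℤ Q] {BL : LinearMap.BilinForm ℤ L} {BM : LinearMap.BilinForm ℤ M}
  {BQ : LinearMap.BilinForm ℤ Q}

theorem Represents.trans (hLM : Represents BL BM) (hMQ : Represents BM BQ) :
    Represents BL BQ := by
  obtain ⟨f, hf, hBf⟩ := hLM
  obtain ⟨g, hg, hBg⟩ := hMQ
  exact ⟨g ∘ₗ f, hg.comp hf, fun x y ↦ by simp [hBg, hBf]⟩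

theorem Represents.of_separatingLeft (hBL : BL.SeparatingLeft) (f : L →ₗ[ℤ] Q)
    (hf : ∀ x y, BQ (f x) (f y) = BL x y) : Represents BL BQ := by
  refine ⟨f, (injective_iff_map_eq_zero f).mpr fun x hx ↦ hBL x fun y ↦ ?_, hf⟩
  rw [← hf, hx, map_zero, LinearMap.zero_apply]

theorem represents_toBilin'_diagonal_iff {ι : Type*} [Fintype ι] [DecidableEq ι] {d : ι → ℤ}
    (hd : ∀ i, d i ≠ 0) :
    Represents (Matrix.diagonal d).toBilin' BQ ↔
      ∃ v : ι → Q, BQ.IsOrthoᵢ v ∧ ∀ i, BQ (v i) (v i) = d i := by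
  constructor
  · rintro ⟨f, -, hf⟩
    exact ⟨fun i ↦ f (Pi.single i 1), LinearMap.isOrthoᵢ_def.mpr fun i j hij ↦ by simp [hf, hij],
      fun i ↦ by simp [hf]⟩
  · rintro ⟨v, hv, hvd⟩
    refine .of_separatingLeft ?_ (Fintype.linearCombination ℤ v) fun x y ↦ ?_
    · rw [Matrix.separatingLeft_toBilin'_iff, Matrix.separatingLeft_iff_det_ne_zero,
        Matrix.det_diagonal]
      exact Finset.prod_ne_zero_iff.mpr fun i _ ↦ hd i
    · simp only [Fintype.linearCombination_apply, LinearMap.BilinForm.sum_left,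
        LinearMap.BilinForm.sum_right, LinearMap.BilinForm.smul_left,
        LinearMap.BilinForm.smul_right, Matrix.toBilin'_apply', Matrix.mulVec_diagonal,
        dotProduct]
      refine Finset.sum_congr rfl fun i _ ↦ ?_
      rw [Finset.sum_eq_single i (fun j _ hji ↦ by rw [hv hji, mul_zero]) (by simp), hvd]
      ring

end Represents

namespace LinearMap.BilinForm

variable {R M : Type*} [CommRing R] [AddCommGroup M] [Module R M] {B : LinearMap.BilinForm R M}

theorem IsSymm.exists_unit_orthogonal_of_sq_apply_eq_one (hB : B.IsSymm) {e f g : M}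
    (he : B e e = 1) (hg : B g g = 2) (hfg : B f g = 0) (hef : B e f = 0)
    (heg : B e g ^ 2 = 1) : ∃ x, B x x = 1 ∧ B x e = 0 ∧ B x f = 0 := by
  refine ⟨g - B e g • e, ?_, ?_, ?_⟩ <;>
    simp only [map_sub, LinearMap.sub_apply, smul_left, smul_right, he, hg, hef,
      hB.eq g e, hB.eq g f, hfg]
  · linear_combination -heg
  all_goals ring

variable [LinearOrder R] [IsStrictOrderedRing R]

theorem IsPosSemidef.sum_sq_le_of_isOrthoᵢ {ι : Type*} [Fintype ι] (hB : B.IsPosSemidef)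
    {f : ι → M} (hf : B.IsOrthoᵢ f) {n : R} (hn : 0 < n) (hfn : ∀ i, B (f i) (f i) = n)
    (e : M) : ∑ i, B e (f i) ^ 2 ≤ n * B e e := by
  set c := fun i ↦ B e (f i)
  set p := ∑ i, c i • f i
  have hep : B e p = ∑ i, c i ^ 2 := by simp only [p, sum_right, smul_right, c, sq]
  have hpe : B p e = ∑ i, c i ^ 2 := by rw [hB.isSymm.eq, hep]
  have hpp : B p p = n * ∑ i, c i ^ 2 := by
    simp only [p, sum_left, sum_right, smul_left, smul_right, Finset.mul_sum]
    refine Finset.sum_congr rfl fun i _ ↦ ?_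
    rw [Finset.sum_eq_single i (fun j _ hji ↦ by rw [hf hji, mul_zero, mul_zero]) (by simp),
      hfn]
    ring
  have hv : 0 ≤ n * (n * B e e - ∑ i, c i ^ 2) := by
    have := hB.isNonneg.nonneg (n • e - p)
    simp only [map_sub, LinearMap.sub_apply, smul_left, smul_right, hep, hpe, hpp] at this
    linarith
  linarith [nonneg_of_mul_nonneg_right hv hn]

end LinearMap.BilinForm

theorem exists_eq_zero_of_sum_sq_lt_card {ι : Type*} [Fintype ι] (c : ι → ℤ)
    (h : ∑ i, c i ^ 2 < Fintype.card ι) : ∃ i, c i = 0 := by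
  by_contra! hc
  have hle : ∑ _i : ι, (1 : ℤ) ≤ ∑ i, c i ^ 2 := Finset.sum_le_sum fun i _ ↦
    (one_le_sq_iff_one_le_abs _).mpr (Int.one_le_abs (hc i))
  rw [Finset.sum_const, Finset.card_univ, nsmul_one] at hle
  exact hle.not_gt h

section Criterion

variable {Q : Type*} [AddCommGroup Q] [Module ℤ Q] {B : LinearMap.BilinForm ℤ Q}

theorem represents_formA_of_orthogonal (hB : B.IsSymm) {x y z : Q} (hx : B x x = 1)
    (hy : B y y = 1) (hz : B z z = 2) (hxy : B x y = 0) (hxz : B x z = 0) (hyz : B y z = 0) :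
    Represents formA B := by
  refine (represents_toBilin'_diagonal_iff (by decide)).mpr ⟨![x, y, z], ?_, ?_⟩
  · intro i j hij
    fin_cases i <;> fin_cases j <;>
      simp [Function.onFun, hxy, hxz, hyz, hB.eq y x, hB.eq z x, hB.eq z y] at hij ⊢
  · intro i
    fin_cases i <;> simp [hx, hy, hz]

theorem represents_formA_of_isOrthoᵢ (hB : B.IsPosSemidef) {e : Fin 2 → Q} (he : B.IsOrthoᵢ e)
    (he1 : ∀ i, B (e i) (e i) = 1) {f : Fin 3 → Q} (hf : B.IsOrthoᵢ f)
    (hf2 : ∀ i, B (f i) (f i) = 2) : Represents formA B := by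
  have hsum (k : Fin 2) : ∑ i, B (e k) (f i) ^ 2 ≤ 2 := by
    simpa [he1] using hB.sum_sq_le_of_isOrthoᵢ hf two_pos hf2 (e k)
  have hzero (k : Fin 2) : ∃ i, B (e k) (f i) = 0 :=
    exists_eq_zero_of_sum_sq_lt_card _ ((hsum k).trans_lt (by simp))
  obtain ⟨i, hi⟩ := hzero 1
  by_cases hb : ∀ j, B (e 1) (f j) = 0
  · obtain ⟨k, hk⟩ := hzero 0
    exact represents_formA_of_orthogonal hB.isSymm (he1 0) (he1 1) (hf2 k) (he zero_ne_one) hk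
      (hb k)
  · obtain ⟨j, hj⟩ := not_forall.mp hb
    have hj1 : B (e 1) (f j) ^ 2 = 1 := by
      have hle : B (e 1) (f j) ^ 2 < 2 ^ 2 :=
        ((Finset.single_le_sum (fun _ _ ↦ sq_nonneg _) (Finset.mem_univ j)).trans
          (hsum 1)).trans_lt (by norm_num)
      have h2 := abs_lt_of_sq_lt_sq hle zero_le_two
      have h1 := Int.one_le_abs hj
      rw [← sq_abs, show |B (e 1) (f j)| = 1 by omega, one_pow]
    obtain ⟨x, hx, hxe, hxf⟩ := hB.isSymm.exists_unit_orthogonal_of_sq_apply_eq_one (he1 1)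
      (hf2 j) (hf fun hij ↦ hj (hij ▸ hi)) hi hj1
    exact represents_formA_of_orthogonal hB.isSymm hx (he1 1) (hf2 i) hxe hxf hi

theorem represents_formA_of_represents_formB_formC (hB : B.IsPosSemidef)
    (hformB : Represents formB B) (hformC : Represents formC B) : Represents formA B := by
  obtain ⟨e, he, he1⟩ := (represents_toBilin'_diagonal_iff (d := ![1, 1]) (by decide)).mp hformB
  obtain ⟨f, hf, hf2⟩ := (represents_toBilin'_diagonal_iff (d := ![2, 2, 2]) (by decide)).mp hformC
  exact represents_formA_of_isOrthoᵢ hB he (fun i ↦ (he1 i).trans (by fin_cases i <;> rfl)) hf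
    (fun i ↦ (hf2 i).trans (by fin_cases i <;> rfl))

end Criterion

theorem BC_criterion_set_general (Q : Type) [AddCommGroup Q] [Module ℤ Q]
    (BQ : LinearMap.BilinForm ℤ Q)
    (hsymm : ∀ x y : Q, BQ x y = BQ y x)
    (hpos : ∀ x : Q, x ≠ 0 → 0 < BQ x x)
    (hB : Represents formB BQ) (hC : Represents formC BQ) :
    ∀ (L : Type) [AddCommGroup L] [Module ℤ L] [Module.Free ℤ L] [Module.Finite ℤ L]
      (BL : LinearMap.BilinForm ℤ L),
      Represents BL formA → Represents BL BQ := by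
  intro L _ _ _ _ BL hLA
  have hBQ : BQ.IsPosSemidef :=
    ⟨⟨hsymm⟩, ⟨fun x ↦ (eq_or_ne x 0).elim (fun hx ↦ by simp [hx]) fun hx ↦ (hpos x hx).le⟩⟩
  exact hLA.trans (represents_formA_of_represents_formB_formC hBQ hB hC)

/-- {⟨1⟩⊕⟨1⟩, ⟨2⟩⊕⟨2⟩⊕⟨2⟩} is a criterion set for the set of lattices
represented by ⟨1⟩⊕⟨1⟩⊕⟨2⟩: any positive-definite integral lattice representing both
⟨1⟩⊕⟨1⟩ and ⟨2⟩⊕⟨2⟩⊕⟨2⟩ represents every lattice represented by ⟨1⟩⊕⟨1⟩⊕⟨2⟩. -/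
theorem BC_criterion_set (Q : Type) [AddCommGroup Q] [Module ℤ Q]
    [Module.Free ℤ Q] [Module.Finite ℤ Q]
    (BQ : LinearMap.BilinForm ℤ Q)
    (hsymm : ∀ x y : Q, BQ x y = BQ y x)
    (hpos : ∀ x : Q, x ≠ 0 → 0 < BQ x x)
    (hB : Represents formB BQ) (hC : Represents formC BQ) :
    ∀ (L : Type) [AddCommGroup L] [Module ℤ L] [Module.Free ℤ L] [Module.Finite ℤ L]
      (BL : LinearMap.BilinForm ℤ L),
      Represents BL formA → Represents BL BQ :=
  BC_criterion_set_general Q BQ hsymm hpos hB hC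
end
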